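/- arXiv:math/0404407 — 4 statements merged into one kernel-verified Lean document; each statement's English description precedes it below -/
import Mathlib

section
/- Let $\gamma \in (0, 1/2)$ and let $x_0, x_1, \dots, x_N$ be nonnegative real numbers satisfying $x_k \leq \gamma(x_{k+1} + x_{k-1})$ for all $1 \leq k \leq N-1$. Set $\xi := (1 + \sqrt{1 - 4\gamma^2})/(2\gamma)$. Then $\xi > 1$ and for every $0 \leq k \leq N$ we have $x_k \leq x_0 \xi^{-k} + x_N \xi^{-(N-k)}$. -/
/-- Lemma `des-recur`: discrete exponential decay for a finite sequence satisfying a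
three-term recurrence inequality with constant `γ ∈ (0, 1/2)`. -/
theorem stmt_0 (N : ℕ) (γ : ℝ) (hγ : γ ∈ Set.Ioo (0:ℝ) (1/2))
    (x : ℕ → ℝ) (hx : ∀ k ≤ N, 0 ≤ x k)
    (hrec : ∀ k, 1 ≤ k → k + 1 ≤ N → x k ≤ γ * (x (k+1) + x (k-1))) :
    1 < (1 + Real.sqrt (1 - 4*γ^2)) / (2*γ) ∧
    ∀ k ≤ N, x k ≤ x 0 * ((1 + Real.sqrt (1 - 4*γ^2)) / (2*γ))⁻¹ ^ k
        + x N * ((1 + Real.sqrt (1 - 4*γ^2)) / (2*γ))⁻¹ ^ (N - k) := by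
  obtain ⟨hγ0, hγhalf⟩ := hγ
  set s : ℝ := Real.sqrt (1 - 4*γ^2) with hs
  have hs0 : 0 ≤ s := Real.sqrt_nonneg _
  have hsq : s^2 = 1 - 4*γ^2 := Real.sq_sqrt (by nlinarith)
  have hs1 : s < 1 := by nlinarith
  have hξ : 1 < (1 + s) / (2*γ) := by
    rw [lt_div_iff₀ (by linarith)]; nlinarith
  refine ⟨hξ, ?_⟩
  set r : ℝ := (1 - s) / (2*γ) with hr
  have hr0 : 0 ≤ r := div_nonneg (by linarith) (by linarith)
  have hkey : γ * (r^2 + 1) = r := by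
    rw [hr]; field_simp; nlinarith
  have hinv : ((1 + s) / (2*γ))⁻¹ = r := by
    rw [hr, inv_div, div_eq_div_iff (by linarith) (by linarith)]; nlinarith
  simp only [hinv]
  have hstep : ∀ m : ℕ, r^(m+1) = γ * (r^(m+2) + r^m) := by
    intro m
    calc r^(m+1) = r^m * r := pow_succ r m
      _ = r^m * (γ * (r^2 + 1)) := by rw [hkey]
      _ = γ * (r^(m+2) + r^m) := by ring
  set y : ℕ → ℝ := fun k => x 0 * r^k + x N * r^(N-k) with hy
  set z : ℕ → ℝ := fun k => x k - y k with hz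
  have hz0 : z 0 ≤ 0 := by
    have : y 0 = x 0 + x N * r^N := by simp [hy]
    have hxN : 0 ≤ x N := hx N le_rfl
    have : x N * r^N ≥ 0 := mul_nonneg hxN (pow_nonneg hr0 _)
    simp only [hz]; linarith [‹y 0 = x 0 + x N * r^N›]
  have hzN : z N ≤ 0 := by
    have : y N = x 0 * r^N + x N := by simp [hy]
    have hx0 : 0 ≤ x 0 := hx 0 (Nat.zero_le _)
    have : x 0 * r^N ≥ 0 := mul_nonneg hx0 (pow_nonneg hr0 _)
    simp only [hz]; linarith [‹y N = x 0 * r^N + x N›]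
  have hzrec : ∀ k, 1 ≤ k → k + 1 ≤ N → z k ≤ γ * (z (k+1) + z (k-1)) := by
    intro k hk1 hkN
    have hyk : y k = γ * (y (k+1) + y (k-1)) := by
      have e1 : r^k = γ * (r^(k+1) + r^(k-1)) := by
        have := hstep (k-1)
        have h1 : k - 1 + 1 = k := by omega
        have h2 : k - 1 + 2 = k + 1 := by omega
        rwa [h1, h2] at this
      have e2 : r^(N-k) = γ * (r^(N-(k+1)) + r^(N-(k-1))) := by
        have := hstep (N - (k+1))
        have h1 : N - (k+1) + 1 = N - k := by omega
        have h2 : N - (k+1) + 2 = N - (k-1) := by omega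
        rw [h1, h2] at this; linarith
      simp only [hy]
      rw [e1, e2]; ring
    have := hrec k hk1 hkN
    simp only [hz]; linarith
  obtain ⟨k₀, hk₀mem, hk₀max⟩ :=
    Finset.exists_max_image (Finset.range (N+1)) z ⟨0, by simp⟩
  have hk₀N : k₀ ≤ N := by
    have := Finset.mem_range.mp hk₀mem; omega
  have hzk₀ : z k₀ ≤ 0 := by
    by_contra h
    push_neg at h
    have hk₀0 : k₀ ≠ 0 := by rintro rfl; linarith
    have hk₀Nne : k₀ ≠ N := by rintro rfl; linarith
    have hk1 : 1 ≤ k₀ := by omega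
    have hkN : k₀ + 1 ≤ N := by omega
    have h1 : z (k₀+1) ≤ z k₀ := hk₀max _ (Finset.mem_range.mpr (by omega))
    have h2 : z (k₀-1) ≤ z k₀ := hk₀max _ (Finset.mem_range.mpr (by omega))
    have := hzrec k₀ hk1 hkN
    nlinarith
  intro k hk
  have : z k ≤ z k₀ := hk₀max _ (Finset.mem_range.mpr (by omega))
  have : z k ≤ 0 := le_trans this hzk₀
  simp only [hz, hy] at this
  linarith
end

section
/- Let $\gamma \in (0,1/2)$ and let $(x_k)_{k \geq 0}$ be an infinite sequence of nonnegative real numbers satisfying $x_k \leq \gamma(x_{k+1} + x_{k-1})$ for all $k \geq 1$, and such that $x_k \to 0$ as $k \to \infty$. Set $\xi := (1+\sqrt{1-4\gamma^2})/(2\gamma)$. Then for every $k \geq 0$ we have $x_k \leq x_0 \xi^{-k}$. -/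
/-- Discrete maximum principle for a three-term recurrence inequality. -/
lemma maxp (γ : ℝ) (hγ0 : 0 < γ) (hγ1 : 2*γ < 1) (N : ℕ) (d : ℕ → ℝ)
    (h : ∀ m, m + 2 ≤ N → d (m+1) ≤ γ * (d (m+2) + d m)) :
    ∀ k ≤ N, d k ≤ max (max (d 0) (d N)) 0 := by
  obtain ⟨k0, hk0, hmax⟩ := Finset.exists_max_image (Finset.range (N+1)) d ⟨0, by simp⟩
  have hk0N : k0 ≤ N := by have := Finset.mem_range.mp hk0; omega
  intro k hk
  have hdk : d k ≤ d k0 := hmax k (Finset.mem_range.mpr (by omega))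
  rcases eq_or_ne k0 0 with h0 | h0
  · subst h0; exact le_trans hdk (le_trans (le_max_left _ _) (le_max_left _ _))
  rcases eq_or_ne k0 N with hN | hN
  · subst hN; exact le_trans hdk (le_trans (le_max_right _ _) (le_max_left _ _))
  obtain ⟨m, rfl⟩ : ∃ m, k0 = m+1 := ⟨k0-1, by omega⟩
  by_cases hpos : d (m+1) ≤ 0
  · exact le_trans hdk (le_trans hpos (le_max_right _ _))
  push_neg at hpos
  exfalso
  have hr := h m (by omega)
  have h2 : d (m+2) ≤ d (m+1) := hmax _ (Finset.mem_range.mpr (by omega))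
  have h3 : d m ≤ d (m+1) := hmax _ (Finset.mem_range.mpr (by omega))
  nlinarith

/-- Corollary `des-recur`: discrete exponential decay for an infinite sequence satisfying a
three-term recurrence inequality with constant `γ ∈ (0, 1/2)` and tending to `0`. -/
theorem stmt_1 (γ : ℝ) (hγ : γ ∈ Set.Ioo (0:ℝ) (1/2))
    (x : ℕ → ℝ) (hx : ∀ k, 0 ≤ x k)
    (hrec : ∀ k, 1 ≤ k → x k ≤ γ * (x (k+1) + x (k-1)))
    (hlim : Filter.Tendsto x Filter.atTop (nhds 0)) :
    ∀ k, x k ≤ x 0 * ((1 + Real.sqrt (1 - 4*γ^2)) / (2*γ))⁻¹ ^ k := by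
  obtain ⟨hγ0, hγ2⟩ := hγ
  have hγ2' : 2*γ < 1 := by linarith
  set s := Real.sqrt (1 - 4*γ^2) with hs_def
  have h4 : (0:ℝ) < 1 - 4*γ^2 := by nlinarith
  have hs0 : 0 ≤ s := Real.sqrt_nonneg _
  have hs2 : s^2 = 1 - 4*γ^2 := Real.sq_sqrt h4.le
  set ξ := (1 + s)/(2*γ) with hξ_def
  have hξ1 : 1 < ξ := by
    rw [hξ_def, lt_div_iff₀ (by linarith)]; linarith
  have hξ0 : (0:ℝ) < ξ := by linarith
  have hξne : ξ ≠ 0 := ne_of_gt hξ0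
  have hIX : ξ⁻¹ * ξ = 1 := inv_mul_cancel₀ hξne
  have hI0 : (0:ℝ) ≤ ξ⁻¹ := by positivity
  have hI1 : ξ⁻¹ ≤ 1 := by
    rw [inv_le_one_iff₀]; right; linarith
  have key : γ * (ξ⁻¹ + ξ) = 1 := by
    have h1 : γ * ξ^2 + γ = ξ := by
      rw [hξ_def]; field_simp; nlinarith [hs2]
    have h2 : γ * (ξ⁻¹ + ξ) * ξ = 1 * ξ := by
      linear_combination γ * hIX + h1
    exact mul_right_cancel₀ hξne h2
  intro k
  have hmain : ∀ N, k ≤ N → x k ≤ x 0 * ξ⁻¹^k + x N := by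
    intro N hkN
    set C := x N * ξ⁻¹^N with hC
    have hC0 : 0 ≤ C := mul_nonneg (hx N) (pow_nonneg hI0 N)
    set u : ℕ → ℝ := fun j => x 0 * ξ⁻¹^j + C * ξ^j with hu
    have hurec : ∀ m, u (m+1) = γ * (u (m+2) + u m) := by
      intro m
      simp only [hu, pow_succ]
      linear_combination (-(x 0 * ξ⁻¹^m * ξ⁻¹ + C * ξ^m * ξ)) * key
        + γ * (x 0 * ξ⁻¹^m + C * ξ^m) * hIX
    set d : ℕ → ℝ := fun j => x j - u j with hd
    have hdrec : ∀ m, m + 2 ≤ N → d (m+1) ≤ γ * (d (m+2) + d m) := by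
      intro m _
      have h1 := hrec (m+1) (by omega)
      simp only [Nat.add_sub_cancel] at h1
      have h2 := hurec m
      simp only [hd]
      linarith
    have hIXN : ξ⁻¹^N * ξ^N = 1 := by rw [← mul_pow, hIX, one_pow]
    have hd0 : d 0 ≤ 0 := by simp [hd, hu]; linarith
    have hdN : d N ≤ 0 := by
      have : u N = x 0 * ξ⁻¹^N + x N := by
        simp only [hu, hC]; rw [mul_assoc, hIXN, mul_one]
      simp only [hd, this]
      nlinarith [pow_nonneg hI0 N, hx 0]
    have hk := maxp γ hγ0 hγ2' N d hdrec k hkN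
    have hk' : d k ≤ 0 := le_trans hk (by simp [hd0, hdN])
    have hCk : C * ξ^k ≤ x N := by
      have h5 : ξ⁻¹^N ≤ ξ⁻¹^k := pow_le_pow_of_le_one hI0 hI1 hkN
      have h6 : ξ⁻¹^N * ξ^k ≤ ξ⁻¹^k * ξ^k :=
        mul_le_mul_of_nonneg_right h5 (by positivity)
      rw [← mul_pow, hIX, one_pow] at h6
      calc C * ξ^k = x N * (ξ⁻¹^N * ξ^k) := by rw [hC]; ring
        _ ≤ x N * 1 := mul_le_mul_of_nonneg_left h6 (hx N)
        _ = x N := mul_one _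
    have : x k ≤ u k := by simpa [hd, sub_nonpos] using hk'
    simp only [hu] at this
    linarith
  have ht : Filter.Tendsto (fun N => x 0 * ξ⁻¹^k + x N) Filter.atTop
      (nhds (x 0 * ξ⁻¹^k + 0)) := tendsto_const_nhds.add hlim
  have := ge_of_tendsto ht (Filter.eventually_atTop.mpr ⟨k, fun b hb => hmain b hb⟩)
  linarith
end

section
/- Define $\gamma(\eta) := 1/(e^{\eta/2} + e^{-\eta/2})$ for real $\eta$. For any $\eta_0 > 0$ there exists $\delta > 0$ such that for every real $\eta$ with $|\eta| \geq \eta_0$ one has $\int_0^1 e^{\eta x}\,dx < \gamma(\eta_0)\left(\int_{-1+\delta}^0 e^{\eta x}\,dx + \int_1^{2-\delta} e^{\eta x}\,dx\right).$ -/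
/-!
Write `K = e^{η₀/2} + e^{-η₀/2} = 1/γ(η₀)`. The reflection `x ↦ 1 - x` fixes `[0, 1]`, swaps the
two outer intervals and turns `η` into `-η`, so it suffices to treat `η ≥ η₀ > 0`. Computing the
integrals and multiplying by `K η e^{(2-δ)η}`, the inequality becomes `expGap K δ w > 0` in the
variable `w = e^{-η} ∈ (0, e^{-η₀}]`. For `δ = 0` the gap factors as
`(1 - w)(e^{-η₀/2} - w)(e^{η₀/2} - w)`, which is positive on the compact interval `[0, e^{-η₀}]`;
the point `w = 0` accounts for `η → ∞`. Since the gap is jointly continuous in `(δ, w)`, the tube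
lemma gives one `δ > 0` that works for all `w` at once.
-/

open Real Set Filter Topology

lemma integral_exp_mul_eq_div (η a b : ℝ) (hη : η ≠ 0) :
    ∫ x in a..b, exp (η * x) = (exp (η * b) - exp (η * a)) / η := by
  rw [intervalIntegral.integral_comp_mul_left exp hη, integral_exp, smul_eq_mul, inv_mul_eq_div]

lemma integral_exp_mul_eq_reflect (η a b : ℝ) :
    ∫ x in a..b, exp (η * x) = exp η * ∫ x in (1 - b)..(1 - a), exp (-η * x) := by
  rw [← intervalIntegral.integral_const_mul, ← intervalIntegral.integral_comp_sub_left]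
  congr 1 with x
  rw [← exp_add]
  ring_nf

def ExpIntegralsLt (c δ η : ℝ) : Prop :=
  (∫ x in (0:ℝ)..1, exp (η * x)) <
    c * ((∫ x in (-1+δ:ℝ)..0, exp (η * x)) + ∫ x in (1:ℝ)..(2-δ), exp (η * x))

lemma ExpIntegralsLt.of_neg {c δ η : ℝ} (h : ExpIntegralsLt c δ (-η)) :
    ExpIntegralsLt c δ η := by
  unfold ExpIntegralsLt at *
  rw [integral_exp_mul_eq_reflect η 0, integral_exp_mul_eq_reflect η (-1 + δ),
    integral_exp_mul_eq_reflect η 1, show (1:ℝ) - (-1 + δ) = 2 - δ by ring,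
    show (1:ℝ) - (2 - δ) = -1 + δ by ring, sub_self, sub_zero]
  calc _ < exp η * (c * ((∫ x in (-1+δ:ℝ)..0, exp (-η * x)) +
          ∫ x in (1:ℝ)..(2-δ), exp (-η * x))) := mul_lt_mul_of_pos_left h (exp_pos η)
    _ = _ := by ring

noncomputable def expGap (K δ w : ℝ) : ℝ :=
  (1 - w ^ (1 - δ)) * (1 + w ^ (2 - δ)) - K * (w ^ (1 - δ) - w ^ (2 - δ))

lemma expGap_zero (K w : ℝ) : expGap K 0 w = (1 - w) * (1 - K * w + w ^ 2) := by
  simp only [expGap, sub_zero, rpow_one]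
  norm_cast
  ring

lemma continuousAt_expGap (K w : ℝ) :
    ContinuousAt (fun p : ℝ × ℝ => expGap K p.1 p.2) (0, w) := by
  have hpow : ∀ e : ℝ, 0 < e → ContinuousAt (fun p : ℝ × ℝ => p.2 ^ (e - p.1)) (0, w) :=
    fun e he => continuousAt_snd.rpow (continuousAt_const.sub continuousAt_fst)
      (Or.inr (by simpa using he))
  have h1 := hpow 1 one_pos
  have h2 := hpow 2 two_pos
  unfold expGap
  fun_prop

lemma exists_pos_forall_expGap_pos {K w₀ : ℝ} (h : ∀ w ∈ Icc 0 w₀, 0 < expGap K 0 w) :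
    ∃ δ > 0, ∀ w ∈ Icc 0 w₀, 0 < expGap K δ w :=
  (isCompact_Icc.eventually_forall_of_forall_eventually fun w hw =>
    continuousAt_const.eventually_lt (continuousAt_expGap K w) (h w hw)).exists_gt

lemma expGap_zero_pos {η₀ w : ℝ} (hη₀ : 0 < η₀) (hw : w ∈ Icc 0 (exp (-η₀))) :
    0 < expGap (exp (η₀ / 2) + exp (-(η₀ / 2))) 0 w := by
  have hinv : exp (η₀ / 2) * exp (-(η₀ / 2)) = 1 := by rw [← exp_add, add_neg_cancel, exp_zero]
  have hsmall : exp (-η₀) < exp (-(η₀ / 2)) := exp_lt_exp.2 (by linarith)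
  have hlarge : exp (-(η₀ / 2)) < exp (η₀ / 2) := exp_lt_exp.2 (by linarith)
  have hone : exp (-(η₀ / 2)) < 1 := exp_lt_one_iff.2 (by linarith)
  rw [expGap_zero, show 1 - (exp (η₀ / 2) + exp (-(η₀ / 2))) * w + w ^ 2
      = (exp (-(η₀ / 2)) - w) * (exp (η₀ / 2) - w) by linear_combination -hinv]
  obtain ⟨-, hw⟩ := hw
  exact mul_pos (by linarith) (mul_pos (by linarith) (by linarith))

lemma expIntegralsLt_of_expGap_pos {K δ η : ℝ} (hK : 0 < K) (hη : 0 < η)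
    (hgap : 0 < expGap K δ (exp (-η))) : ExpIntegralsLt (1 / K) δ η := by
  unfold ExpIntegralsLt
  simp only [integral_exp_mul_eq_div η _ _ hη.ne', expGap, ← exp_mul] at *
  have hca : exp (η * (2 - δ)) * exp (-η * (1 - δ)) = exp η := by rw [← exp_add]; ring_nf
  have hcb : exp (η * (2 - δ)) * exp (-η * (2 - δ)) = 1 := by
    rw [← exp_add]; ring_nf; exact exp_zero
  have hreflect : exp (-η * (1 - δ)) = exp (η * (-1 + δ)) := by ring_nf
  have hscaled := mul_pos (exp_pos (η * (2 - δ))) hgap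
  rw [mul_one, mul_zero, exp_zero, ← hreflect, ← add_div, one_div_mul_eq_div, lt_div_iff₀ hK,
    div_mul_eq_mul_div, div_lt_div_iff_of_pos_right hη]
  linear_combination hscaled - (1 + K) * hca + (1 - exp (-η * (1 - δ)) + K) * hcb

/-- Lemma `integrals-dexponencials`: for any `η₀ > 0` there is `δ > 0` such that for every
`η` with `|η| ≥ η₀` the exponential-integral inequality holds, with
`γ(η₀) = 1/(e^{η₀/2} + e^{-η₀/2})`. -/
theorem stmt_2 (η₀ : ℝ) (hη₀ : 0 < η₀) :
    ∃ δ > 0, ∀ η : ℝ, η₀ ≤ |η| →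
      (∫ x in (0:ℝ)..1, Real.exp (η * x)) <
        (1 / (Real.exp (η₀/2) + Real.exp (-(η₀/2)))) *
          ((∫ x in (-1+δ:ℝ)..0, Real.exp (η * x)) +
            ∫ x in (1:ℝ)..(2-δ), Real.exp (η * x)) := by
  obtain ⟨δ, hδ, hgap⟩ := exists_pos_forall_expGap_pos fun w hw => expGap_zero_pos hη₀ hw
  have hK : 0 < exp (η₀ / 2) + exp (-(η₀ / 2)) := by positivity
  have hpositive : ∀ η, η₀ ≤ η → ExpIntegralsLt (1 / (exp (η₀ / 2) + exp (-(η₀ / 2)))) δ η :=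
    fun η hη => expIntegralsLt_of_expGap_pos hK (hη₀.trans_le hη)
      (hgap _ ⟨(exp_pos _).le, exp_le_exp.2 (neg_le_neg hη)⟩)
  refine ⟨δ, hδ, fun η hη => ?_⟩
  rcases le_abs'.1 hη with hle | hge
  · exact (hpositive (-η) (by linarith)).of_neg
  · exact hpositive η hge
end

section
/- Let $A$ be a diagonalizable linear endomorphism of $\mathbb{R}^m$ with all eigenvalues real, nonzero, and of absolute value at least $1$ (acting diagonally with integer weights $w_1,\dots,w_k$, each $w_j \neq 0$, on $\mathbb{R}^m = \bigoplus_j \mathbb{R}^{m_j}$). Let $\phi_0(t) = e^{tA} x$ for a fixed $x \in \mathbb{R}^m$, and define $t_j := \int_{j}^{j+1} |\phi_0(t)|\,dt$ for $j \in \{-1, 0, 1\}$. Then $t_0 \leq \frac{1}{e + e^{-1}} (t_{-1} + t_{1})$. -/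
open MeasureTheory

private lemma coshge9 (v : ℝ) (hv : 2 ≤ |v|) :
    Real.exp 2 + Real.exp (-2) ≤ Real.exp v + Real.exp (-v) := by
  wlog h : 0 ≤ v generalizing v
  · have := this (-v) (by rwa [abs_neg]) (by linarith [le_of_not_ge h])
    simpa [neg_neg, add_comm] using this
  have hv2 : 2 ≤ v := by rwa [abs_of_nonneg h] at hv
  have h1 : Real.exp 2 ≤ Real.exp v := Real.exp_le_exp.2 hv2
  have h2 : Real.exp (-(v+2)) ≤ 1 := Real.exp_le_one_iff.mpr (by linarith)
  have h3 : Real.exp v * Real.exp (-(v+2)) = Real.exp (-2) := by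
    rw [← Real.exp_add]; ring_nf
  have h4 : Real.exp 2 * Real.exp (-(v+2)) = Real.exp (-v) := by
    rw [← Real.exp_add]; ring_nf
  nlinarith [mul_nonneg (sub_nonneg.2 h1) (sub_nonneg.2 h2)]

private lemma point9 (m : ℕ) (w : Fin m → ℤ) (hw : ∀ j, w j ≠ 0) (x : Fin m → ℝ) (t : ℝ) :
    (Real.exp 1 + Real.exp (-1)) * Real.sqrt (∑ j, (Real.exp ((w j : ℝ) * t) * x j)^2)
      ≤ Real.sqrt (∑ j, (Real.exp ((w j : ℝ) * (t-1)) * x j)^2)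
        + Real.sqrt (∑ j, (Real.exp ((w j : ℝ) * (t+1)) * x j)^2) := by
  set S := ∑ j, (Real.exp ((w j : ℝ) * t) * x j)^2 with hS
  set Sm := ∑ j, (Real.exp ((w j : ℝ) * (t-1)) * x j)^2 with hSm
  set Sp := ∑ j, (Real.exp ((w j : ℝ) * (t+1)) * x j)^2 with hSp
  have hS0 : 0 ≤ S := Finset.sum_nonneg fun j _ => sq_nonneg _
  have hSm0 : 0 ≤ Sm := Finset.sum_nonneg fun j _ => sq_nonneg _
  have hSp0 : 0 ≤ Sp := Finset.sum_nonneg fun j _ => sq_nonneg _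
  -- Cauchy-Schwarz: S ≤ √Sm √Sp
  have hCS : S ≤ Real.sqrt Sm * Real.sqrt Sp := by
    have := Real.sum_mul_le_sqrt_mul_sqrt Finset.univ
      (fun j => Real.exp ((w j : ℝ) * (t-1)) * |x j|)
      (fun j => Real.exp ((w j : ℝ) * (t+1)) * |x j|)
    have e1 : ∀ j : Fin m, (Real.exp ((w j : ℝ) * (t-1)) * |x j|) *
        (Real.exp ((w j : ℝ) * (t+1)) * |x j|) = (Real.exp ((w j : ℝ) * t) * x j)^2 := by
      intro j
      have hex : Real.exp ((w j : ℝ) * (t-1)) * Real.exp ((w j : ℝ) * (t+1))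
          = Real.exp ((w j : ℝ) * t) ^ 2 := by
        rw [sq, ← Real.exp_add, ← Real.exp_add]; ring_nf
      calc (Real.exp ((w j : ℝ) * (t-1)) * |x j|) * (Real.exp ((w j : ℝ) * (t+1)) * |x j|)
          = (Real.exp ((w j : ℝ) * (t-1)) * Real.exp ((w j : ℝ) * (t+1))) * (|x j| * |x j|) := by
            ring
        _ = Real.exp ((w j : ℝ) * t) ^ 2 * (x j * x j) := by rw [hex, abs_mul_abs_self]
        _ = (Real.exp ((w j : ℝ) * t) * x j)^2 := by ring
    have e2 : ∀ j : Fin m, (Real.exp ((w j : ℝ) * (t-1)) * |x j|)^2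
        = (Real.exp ((w j : ℝ) * (t-1)) * x j)^2 := fun j => by rw [mul_pow, mul_pow, sq_abs]
    have e3 : ∀ j : Fin m, (Real.exp ((w j : ℝ) * (t+1)) * |x j|)^2
        = (Real.exp ((w j : ℝ) * (t+1)) * x j)^2 := fun j => by rw [mul_pow, mul_pow, sq_abs]
    simp only [e1, e2, e3] at this
    simpa [hS, hSm, hSp] using this
  -- termwise: (e² + e⁻²) S ≤ Sm + Sp
  have hsum : (Real.exp 2 + Real.exp (-2)) * S ≤ Sm + Sp := by
    rw [hS, hSm, hSp, Finset.mul_sum, ← Finset.sum_add_distrib]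
    apply Finset.sum_le_sum
    intro j _
    have hwj : (2:ℝ) ≤ |2 * (w j : ℝ)| := by
      rw [abs_mul, abs_two]
      have : (1:ℝ) ≤ |(w j : ℝ)| := by
        rw [← Int.cast_abs]
        exact_mod_cast Int.one_le_abs (hw j)
      linarith
    have hc := coshge9 (2 * (w j : ℝ)) hwj
    have em : (Real.exp ((w j : ℝ) * (t-1)) * x j)^2
        = Real.exp (-(2 * (w j : ℝ))) * (Real.exp ((w j : ℝ) * t) * x j)^2 := by
      have h : Real.exp ((w j : ℝ) * (t-1)) ^ 2
          = Real.exp (-(2 * (w j : ℝ))) * Real.exp ((w j : ℝ) * t) ^ 2 := by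
        rw [sq, sq, ← Real.exp_add, ← Real.exp_add, ← Real.exp_add]; ring_nf
      rw [mul_pow, h, mul_pow]; ring
    have ep : (Real.exp ((w j : ℝ) * (t+1)) * x j)^2
        = Real.exp (2 * (w j : ℝ)) * (Real.exp ((w j : ℝ) * t) * x j)^2 := by
      have h : Real.exp ((w j : ℝ) * (t+1)) ^ 2
          = Real.exp (2 * (w j : ℝ)) * Real.exp ((w j : ℝ) * t) ^ 2 := by
        rw [sq, sq, ← Real.exp_add, ← Real.exp_add, ← Real.exp_add]; ring_nf
      rw [mul_pow, h, mul_pow]; ring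
    rw [em, ep]
    nlinarith [sq_nonneg (Real.exp ((w j : ℝ) * t) * x j)]
  -- conclude
  have hL0 : 0 ≤ (Real.exp 1 + Real.exp (-1)) * Real.sqrt S :=
    mul_nonneg (by positivity) (Real.sqrt_nonneg _)
  have hR0 : 0 ≤ Real.sqrt Sm + Real.sqrt Sp := by positivity
  have hsq : ((Real.exp 1 + Real.exp (-1)) * Real.sqrt S)^2
      ≤ (Real.sqrt Sm + Real.sqrt Sp)^2 := by
    have hSsq : Real.sqrt S ^ 2 = S := Real.sq_sqrt hS0
    have hSmsq : Real.sqrt Sm ^ 2 = Sm := Real.sq_sqrt hSm0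
    have hSpsq : Real.sqrt Sp ^ 2 = Sp := Real.sq_sqrt hSp0
    have he2 : Real.exp 1 * Real.exp 1 = Real.exp 2 := by
      rw [← Real.exp_add]; norm_num
    have he2' : Real.exp (-1) * Real.exp (-1) = Real.exp (-2) := by
      rw [← Real.exp_add]; norm_num
    have he1 : Real.exp 1 * Real.exp (-1) = 1 := by
      rw [← Real.exp_add]; norm_num
    nlinarith [hCS, hsum]
  calc (Real.exp 1 + Real.exp (-1)) * Real.sqrt S
      = Real.sqrt (((Real.exp 1 + Real.exp (-1)) * Real.sqrt S)^2) := (Real.sqrt_sq hL0).symm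
    _ ≤ Real.sqrt ((Real.sqrt Sm + Real.sqrt Sp)^2) := Real.sqrt_le_sqrt hsq
    _ = Real.sqrt Sm + Real.sqrt Sp := Real.sqrt_sq hR0

/-- The flow `φ₀(t) = e^{tA} x` of a diagonal linear vector field with nonzero integer
weights `w_j` satisfies `∫₀¹ |φ₀| ≤ (e + e⁻¹)⁻¹ (∫₋₁⁰ |φ₀| + ∫₁² |φ₀|)`.  Here
`|φ₀(t)|² = ∑_j e^{2 w_j t} x_j²`. -/
theorem stmt_9 (m : ℕ) (w : Fin m → ℤ) (hw : ∀ j, w j ≠ 0) (x : Fin m → ℝ) :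
    (∫ t in (0:ℝ)..1, Real.sqrt (∑ j, (Real.exp ((w j : ℝ) * t) * x j)^2))
      ≤ (1 / (Real.exp 1 + Real.exp (-1))) *
        ((∫ t in (-1:ℝ)..0, Real.sqrt (∑ j, (Real.exp ((w j : ℝ) * t) * x j)^2))
          + ∫ t in (1:ℝ)..2, Real.sqrt (∑ j, (Real.exp ((w j : ℝ) * t) * x j)^2)) := by
  set g : ℝ → ℝ := fun t => Real.sqrt (∑ j, (Real.exp ((w j : ℝ) * t) * x j)^2) with hg
  have hgc : Continuous g := by
    apply Continuous.sqrt
    apply continuous_finset_sum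
    intro j _
    fun_prop
  have hc : (0:ℝ) < Real.exp 1 + Real.exp (-1) := by positivity
  have hpt : ∀ t : ℝ, g t ≤ (1 / (Real.exp 1 + Real.exp (-1))) * (g (t-1) + g (t+1)) := by
    intro t
    rw [div_mul_eq_mul_div, le_div_iff₀ hc, one_mul, mul_comm]
    exact point9 m w hw x t
  have hInt : ∀ a b : ℝ, IntervalIntegrable g volume a b :=
    fun a b => hgc.intervalIntegrable a b
  have hm1 : IntervalIntegrable (fun t : ℝ => g (t - 1)) volume 0 1 :=
    ((hgc.comp (continuous_sub_right 1)).intervalIntegrable 0 1)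
  have hp1 : IntervalIntegrable (fun t : ℝ => g (t + 1)) volume 0 1 :=
    ((hgc.comp (continuous_add_right 1)).intervalIntegrable 0 1)
  have hstep : (∫ t in (0:ℝ)..1, g t)
      ≤ ∫ t in (0:ℝ)..1, (1 / (Real.exp 1 + Real.exp (-1))) * (g (t-1) + g (t+1)) := by
    apply intervalIntegral.integral_mono_on (by norm_num) (hInt 0 1)
    · exact (hm1.add hp1).const_mul _
    · intro t _; exact hpt t
  have heq : (∫ t in (0:ℝ)..1, (1 / (Real.exp 1 + Real.exp (-1))) * (g (t-1) + g (t+1)))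
      = (1 / (Real.exp 1 + Real.exp (-1))) *
        ((∫ t in (-1:ℝ)..0, g t) + ∫ t in (1:ℝ)..2, g t) := by
    rw [intervalIntegral.integral_const_mul]
    congr 1
    rw [intervalIntegral.integral_add hm1 hp1]
    congr 1
    · have := intervalIntegral.integral_comp_sub_right (a := (0:ℝ)) (b := 1) g 1
      simp only [zero_sub, sub_self] at this
      exact this
    · have := intervalIntegral.integral_comp_add_right (a := (0:ℝ)) (b := 1) g 1
      rw [this]; norm_num
  calc (∫ t in (0:ℝ)..1, g t) ≤ _ := hstep
    _ = _ := heq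
end
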